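/- arXiv:2604.16188 — 2 statements merged into one kernel-verified Lean document; each statement's English description precedes it below -/
import Mathlib

section
/- For any a ∈ ℕ and b ≥ 2, the ordered Ramsey number of the start-central star of order a versus the monotone cycle of order b equals 1 + (a−1)(b−1). -/
open SimpleGraph Finset

/-- A symmetric `k`-edge-coloring `χ` of the complete graph on `Fin n` contains a copy of `H`
in color `j` via a strictly increasing embedding. -/
def ContainsOrd {m n k : ℕ} (H : SimpleGraph (Fin m))
    (χ : Fin n → Fin n → Fin k) (j : Fin k) : Prop :=
  ∃ φ : Fin m → Fin n, StrictMono φ ∧ ∀ u v : Fin m, H.Adj u v → χ (φ u) (φ v) = j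

/-- Contains a copy via an embedding that is increasing up to a cyclic permutation. -/
def ContainsCyc {m n k : ℕ} (H : SimpleGraph (Fin m))
    (χ : Fin n → Fin n → Fin k) (j : Fin k) : Prop :=
  ∃ φ : Fin m → Fin n, (∃ t : Fin m, StrictMono fun i : Fin m => φ (i + t)) ∧
    ∀ u v : Fin m, H.Adj u v → χ (φ u) (φ v) = j

/-- Contains a copy via an arbitrary injective embedding. -/
def ContainsStd {m n k : ℕ} (H : SimpleGraph (Fin m))
    (χ : Fin n → Fin n → Fin k) (j : Fin k) : Prop :=
  ∃ φ : Fin m → Fin n, Function.Injective φ ∧ ∀ u v : Fin m, H.Adj u v → χ (φ u) (φ v) = j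

/-- The ordered Ramsey number of a family of graphs. -/
noncomputable def Rord {k : ℕ} (m : Fin k → ℕ) (H : ∀ j, SimpleGraph (Fin (m j))) : ℕ :=
  sInf {n | ∀ χ : Fin n → Fin n → Fin k, (∀ u v, χ u v = χ v u) → ∃ j, ContainsOrd (H j) χ j}

/-- The cyclic Ramsey number of a family of graphs. -/
noncomputable def Rcyc {k : ℕ} (m : Fin k → ℕ) (H : ∀ j, SimpleGraph (Fin (m j))) : ℕ :=
  sInf {n | ∀ χ : Fin n → Fin n → Fin k, (∀ u v, χ u v = χ v u) → ∃ j, ContainsCyc (H j) χ j}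

/-- The standard Ramsey number of a family of graphs. -/
noncomputable def Rstd {k : ℕ} (m : Fin k → ℕ) (H : ∀ j, SimpleGraph (Fin (m j))) : ℕ :=
  sInf {n | ∀ χ : Fin n → Fin n → Fin k, (∀ u v, χ u v = χ v u) → ∃ j, ContainsStd (H j) χ j}

/-- The two-color ordered Ramsey number. -/
noncomputable def Rord2 {a b : ℕ} (H₁ : SimpleGraph (Fin a)) (H₂ : SimpleGraph (Fin b)) : ℕ :=
  sInf {n | ∀ χ : Fin n → Fin n → Fin 2, (∀ u v, χ u v = χ v u) →
    ContainsOrd H₁ χ 0 ∨ ContainsOrd H₂ χ 1}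

/-- The two-color cyclic Ramsey number. -/
noncomputable def Rcyc2 {a b : ℕ} (H₁ : SimpleGraph (Fin a)) (H₂ : SimpleGraph (Fin b)) : ℕ :=
  sInf {n | ∀ χ : Fin n → Fin n → Fin 2, (∀ u v, χ u v = χ v u) →
    ContainsCyc H₁ χ 0 ∨ ContainsCyc H₂ χ 1}

/-- The monotone path of order `n`. -/
def monPath (n : ℕ) : SimpleGraph (Fin n) :=
  SimpleGraph.fromRel fun u v => (u : ℕ) + 1 = (v : ℕ)

/-- The monotone cycle of order `n`. -/
def monCycle (n : ℕ) : SimpleGraph (Fin n) :=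
  SimpleGraph.fromRel fun u v => (u : ℕ) + 1 = (v : ℕ) ∨ ((u : ℕ) = 0 ∧ (v : ℕ) = n - 1)

/-- The start-central star of order `n` (center `0`). -/
def starSC (n : ℕ) : SimpleGraph (Fin n) :=
  SimpleGraph.fromRel fun u _ => (u : ℕ) = 0

/-- The star of order `n` with center `c`. -/
def starG (n : ℕ) (c : Fin n) : SimpleGraph (Fin n) :=
  SimpleGraph.fromRel fun u _ => u = c

/-- The nested matching of order `n`. -/
def nestedMatching (n : ℕ) : SimpleGraph (Fin n) :=
  SimpleGraph.fromRel fun u v => (u : ℕ) + (v : ℕ) = n - 1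

/-- Rotational isomorphism of two graphs on `Fin m`. -/
def RotIso {m : ℕ} (G₁ G₂ : SimpleGraph (Fin m)) : Prop :=
  ∃ s : Fin m, ∀ u v : Fin m, G₁.Adj u v ↔ G₂.Adj (u + s) (v + s)

/-
Lower bound: cut the vertices into blocks of `a - 1` consecutive vertices and colour an edge `0`
exactly when it stays inside a block. A colour-`0` start-central star needs `a` vertices in one
block, and a colour-`1` monotone path of order `b` meets `b` different blocks, of which there are
only `b - 1`.

Upper bound: if vertex `0` has fewer than `a - 1` colour-`0` neighbours, it has more than
`(a - 1)(b - 2)` colour-`1` neighbours. Label each of them by the order of the longest colour-`1`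
monotone path ending at it; a colour-`1` edge strictly increases the label, so if no label reaches
`b - 1`, pigeonhole gives `a` vertices with equal labels, pairwise joined in colour `0`. Otherwise
the colour-`1` path of order `b - 1`, preceded by vertex `0`, is a colour-`1` monotone cycle.
-/

section ContainsOrd

variable {m n q : ℕ} {χ : Fin n → Fin n → Fin q} {j : Fin q}

theorem ContainsOrd.mono {H H' : SimpleGraph (Fin m)} (hle : H ≤ H') (h : ContainsOrd H' χ j) :
    ContainsOrd H χ j :=
  let ⟨φ, hφ, hadj⟩ := h
  ⟨φ, hφ, fun u v huv => hadj u v (hle huv)⟩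

theorem containsOrd_fromRel (hχ : ∀ u v, χ u v = χ v u) {r : Fin m → Fin m → Prop}
    {φ : Fin m → Fin n} (hφ : StrictMono φ) (hr : ∀ u v, u ≠ v → r u v → χ (φ u) (φ v) = j) :
    ContainsOrd (SimpleGraph.fromRel r) χ j := by
  refine ⟨φ, hφ, fun u v huv => ?_⟩
  rcases (fromRel_adj r u v).1 huv with ⟨hne, h | h⟩
  · exact hr u v hne h
  · rw [hχ]; exact hr v u hne.symm h

theorem containsOrd_top (hχ : ∀ u v, χ u v = χ v u) {φ : Fin m → Fin n} (hφ : StrictMono φ)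
    (hlt : ∀ u v, u < v → χ (φ u) (φ v) = j) : ContainsOrd (⊤ : SimpleGraph (Fin m)) χ j := by
  refine ⟨φ, hφ, fun u v huv => ?_⟩
  rcases lt_or_gt_of_ne huv with h | h
  · exact hlt u v h
  · rw [hχ]; exact hlt v u h

theorem containsOrd_starSC_cons (hχ : ∀ u v, χ u v = χ v u) {v₀ : Fin n} {φ : Fin m → Fin n}
    (hφ : StrictMono φ) (hv₀ : ∀ i, v₀ < φ i) (hv₀φ : ∀ i, χ v₀ (φ i) = j) :
    ContainsOrd (starSC (m + 1)) χ j := by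
  refine containsOrd_fromRel hχ (Fin.strictMono_cons.2 ⟨hv₀, hφ⟩)
    fun u v hne (hu : (u : ℕ) = 0) => ?_
  obtain rfl : u = 0 := Fin.ext hu
  cases v using Fin.cases with
  | zero => exact absurd rfl hne
  | succ v => simpa using hv₀φ v

theorem containsOrd_monCycle_cons (hχ : ∀ u v, χ u v = χ v u) {v₀ : Fin n}
    {φ : Fin (m + 1) → Fin n} (hφ : StrictMono φ) (hv₀ : ∀ i, v₀ < φ i) (hv₀φ : ∀ i, χ v₀ (φ i) = j)
    (hpath : ∀ u v, (monPath (m + 1)).Adj u v → χ (φ u) (φ v) = j) :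
    ContainsOrd (monCycle (m + 2)) χ j := by
  refine containsOrd_fromRel hχ (Fin.strictMono_cons.2 ⟨hv₀, hφ⟩) fun u v hne huv => ?_
  cases v using Fin.cases with
  | zero => simp at huv
  | succ v =>
    cases u using Fin.cases with
    | zero => simpa using hv₀φ v
    | succ u =>
      have hadj : (monPath (m + 1)).Adj u v :=
        (fromRel_adj _ u v).2 ⟨fun h => hne (congrArg Fin.succ h), Or.inl (by simpa using huv)⟩
      simpa using hpath u v hadj

variable (χ j) in
def MonPathTo (l : ℕ) (v : Fin n) : Prop :=
  ∃ φ : Fin (l + 1) → Fin n,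
    (∀ i : Fin l, φ i.castSucc < φ i.succ ∧ χ (φ i.castSucc) (φ i.succ) = j) ∧ φ (Fin.last l) = v

theorem monPathTo_zero (v : Fin n) : MonPathTo χ j 0 v :=
  ⟨fun _ => v, fun i => i.elim0, rfl⟩

theorem MonPathTo.snoc {l : ℕ} {u v : Fin n} (h : MonPathTo χ j l u) (huv : u < v)
    (hc : χ u v = j) : MonPathTo χ j (l + 1) v := by
  obtain ⟨φ, hφ, rfl⟩ := h
  refine ⟨Fin.snoc φ v, fun i => ?_, Fin.snoc_last _ _⟩
  cases i using Fin.lastCases with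
  | last => rw [Fin.succ_last, Fin.snoc_last, Fin.snoc_castSucc]; exact ⟨huv, hc⟩
  | cast i => rw [Fin.succ_castSucc, Fin.snoc_castSucc, Fin.snoc_castSucc]; exact hφ i

theorem MonPathTo.containsOrd (hχ : ∀ u v, χ u v = χ v u) {l : ℕ} {v : Fin n}
    (h : MonPathTo χ j l v) : ContainsOrd (monPath (l + 1)) χ j := by
  obtain ⟨φ, hφ, -⟩ := h
  refine containsOrd_fromRel hχ (Fin.strictMono_iff_lt_succ.2 fun i => (hφ i).1)
    fun u w _ (huw : (u : ℕ) + 1 = w) => ?_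
  obtain ⟨i, rfl⟩ : ∃ i : Fin l, u = i.castSucc := ⟨u.castLT (by omega), rfl⟩
  obtain rfl : w = i.succ := Fin.ext (by simp [← huw])
  exact (hφ i).2

theorem exists_label_of_not_monPathTo {k : ℕ} (h : ∀ v, ¬ MonPathTo χ j k v) :
    ∃ L : Fin n → ℕ, (∀ v, L v < k) ∧ ∀ u v, u < v → χ u v = j → L u < L v := by
  classical
  set L := fun v => Nat.findGreatest (MonPathTo χ j · v) k
  have hpath (v : Fin n) : MonPathTo χ j (L v) v :=
    Nat.findGreatest_spec (P := (MonPathTo χ j · v)) k.zero_le (monPathTo_zero v)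
  have hlt (v : Fin n) : L v < k :=
    lt_of_le_of_ne (Nat.findGreatest_le k) fun hk => h v (hk ▸ hpath v)
  exact ⟨L, hlt, fun u v huv hc =>
    Nat.le_findGreatest (hlt u) ((hpath u).snoc huv hc)⟩

end ContainsOrd

section TwoColorings

variable {n : ℕ} {χ : Fin n → Fin n → Fin 2}

theorem containsOrd_top_or_monPath (hχ : ∀ u v, χ u v = χ v u) {a k : ℕ} (hn : a * k < n) :
    ContainsOrd (⊤ : SimpleGraph (Fin (a + 1))) χ 0 ∨ ContainsOrd (monPath (k + 1)) χ 1 := by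
  classical
  by_cases hlong : ∃ v, MonPathTo χ 1 k v
  · obtain ⟨v, hv⟩ := hlong
    exact Or.inr (hv.containsOrd hχ)
  obtain ⟨L, hLk, hLlt⟩ := exists_label_of_not_monPathTo (not_exists.1 hlong)
  obtain ⟨y, -, hy⟩ := exists_lt_card_fiber_of_mul_lt_card_of_maps_to (s := univ) (t := range k)
    (n := a) (fun v _ => mem_range.2 (hLk v)) (by simpa [mul_comm] using hn)
  set e := orderEmbOfCardLe _ hy
  have hLe (i : Fin (a + 1)) : L (e i) = y := (mem_filter.1 (orderEmbOfCardLe_mem _ hy i)).2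
  refine Or.inl (containsOrd_top hχ e.strictMono fun u v huv => ?_)
  by_contra hc
  have := hLlt _ _ (e.strictMono huv) (Fin.eq_one_of_ne_zero _ hc)
  rw [hLe, hLe] at this
  exact this.false

theorem containsOrd_starSC_or_monCycle (hχ : ∀ u v, χ u v = χ v u) {a k : ℕ}
    (hn : a * (k + 1) < n) :
    ContainsOrd (starSC (a + 1)) χ 0 ∨ ContainsOrd (monCycle (k + 2)) χ 1 := by
  classical
  have : NeZero n := ⟨by omega⟩
  set T := (Ioi (0 : Fin n)).filter (χ 0 · = 0)
  set S := (Ioi (0 : Fin n)).filter (¬ χ 0 · = 0)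
  have hTS : #T + #S = n - 1 := by
    rw [card_filter_add_card_filter_not, Fin.card_Ioi, Fin.val_zero, Nat.sub_zero]
  by_cases hT : a ≤ #T
  · have hmem (i : Fin a) := mem_filter.1 (orderEmbOfCardLe_mem T hT i)
    exact Or.inl (containsOrd_starSC_cons hχ (orderEmbOfCardLe T hT).strictMono
      (fun i => mem_Ioi.1 (hmem i).1) fun i => (hmem i).2)
  have hS : a * k < #S := by rw [Nat.mul_succ] at hn; omega
  set e := S.orderEmbOfFin rfl
  have hmem (i : Fin #S) : 0 < e i ∧ χ 0 (e i) = 1 := by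
    obtain ⟨h0, h1⟩ := mem_filter.1 (S.orderEmbOfFin_mem rfl i)
    exact ⟨mem_Ioi.1 h0, Fin.eq_one_of_ne_zero _ h1⟩
  rcases containsOrd_top_or_monPath (χ := fun u v => χ (e u) (e v)) (fun u v => hχ _ _) hS with
    ⟨φ, hφ, hclique⟩ | ⟨φ, hφ, hpath⟩
  · exact Or.inl (ContainsOrd.mono le_top ⟨e ∘ φ, e.strictMono.comp hφ, hclique⟩)
  · exact Or.inr (containsOrd_monCycle_cons hχ (e.strictMono.comp hφ) (fun i => (hmem _).1)
      (fun i => (hmem _).2) hpath)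

end TwoColorings

theorem StrictMono.apply_zero_add_le {k : ℕ} {f : Fin (k + 1) → ℕ} (hf : StrictMono f)
    (i : Fin (k + 1)) : f 0 + i ≤ f i := by
  induction i using Fin.induction with
  | zero => simp
  | succ i ih =>
    have := hf i.castSucc_lt_succ
    simp only [Fin.val_succ, Fin.val_castSucc] at *
    omega

theorem monPath_le_monCycle (n : ℕ) : monPath n ≤ monCycle n := fun u v h => by
  simp only [monPath, monCycle, fromRel_adj] at h ⊢
  tauto

def blockColoring (m a : ℕ) (u v : Fin m) : Fin 2 :=
  if (u : ℕ) / a = v / a then 0 else 1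

section blockColoring

variable {m a : ℕ}

theorem blockColoring_comm (u v : Fin m) : blockColoring m a u v = blockColoring m a v u := by
  simp only [blockColoring, eq_comm]

theorem not_containsOrd_starSC_blockColoring (ha : 0 < a) :
    ¬ ContainsOrd (starSC (a + 1)) (blockColoring m a) 0 := by
  rintro ⟨φ, hφ, hadj⟩
  have hne : (0 : Fin (a + 1)) ≠ Fin.last a := by simp [Fin.ext_iff, ha.ne]
  have hsame : (φ 0 : ℕ) / a = (φ (Fin.last a) : ℕ) / a := by
    simpa [blockColoring] using hadj _ _ ((fromRel_adj _ _ _).2 ⟨hne, Or.inl rfl⟩)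
  have hgap := (Fin.val_strictMono.comp hφ).apply_zero_add_le (Fin.last a)
  simp only [Function.comp_apply, Fin.val_last] at hgap
  have := Nat.div_le_div_right (c := a) hgap
  rw [Nat.add_div_right _ ha] at this
  omega

theorem not_containsOrd_monPath_blockColoring {k : ℕ} (hm : m ≤ a * k) :
    ¬ ContainsOrd (monPath (k + 1)) (blockColoring m a) 1 := by
  rintro ⟨φ, hφ, hadj⟩
  have hblock : StrictMono fun i => (φ i : ℕ) / a := Fin.strictMono_iff_lt_succ.2 fun i => by
    have hne : (φ i.castSucc : ℕ) / a ≠ (φ i.succ : ℕ) / a := by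
      simpa [blockColoring] using
        hadj _ _ ((fromRel_adj _ _ _).2 ⟨i.castSucc_lt_succ.ne, Or.inl (by simp)⟩)
    exact (Nat.div_le_div_right (hφ i.castSucc_lt_succ).le).lt_of_ne hne
  have hgap := hblock.apply_zero_add_le (Fin.last k)
  have hlast : (φ (Fin.last k) : ℕ) / a < k := Nat.div_lt_of_lt_mul ((φ _).isLt.trans_le hm)
  simp only [Fin.val_last] at hgap
  exact hlast.not_ge (le_of_add_le_right hgap)

end blockColoring

theorem exists_coloring_not_starSC_not_monCycle {m a k : ℕ} (hm : m ≤ a * (k + 1)) :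
    ∃ χ : Fin m → Fin m → Fin 2, (∀ u v, χ u v = χ v u) ∧
      ¬ ContainsOrd (starSC (a + 1)) χ 0 ∧ ¬ ContainsOrd (monCycle (k + 2)) χ 1 := by
  rcases a.eq_zero_or_pos with rfl | ha
  · obtain rfl : m = 0 := by simpa using hm
    exact ⟨fun _ _ => 0, fun _ _ => rfl, fun ⟨φ, _⟩ => (φ 0).elim0, fun ⟨φ, _⟩ => (φ 0).elim0⟩
  exact ⟨blockColoring m a, blockColoring_comm, not_containsOrd_starSC_blockColoring ha,
    fun h => not_containsOrd_monPath_blockColoring hm (h.mono (monPath_le_monCycle _))⟩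

theorem rord2_eq {a b n : ℕ} {H₁ : SimpleGraph (Fin a)} {H₂ : SimpleGraph (Fin b)}
    (hn : ∀ χ : Fin n → Fin n → Fin 2, (∀ u v, χ u v = χ v u) →
      ContainsOrd H₁ χ 0 ∨ ContainsOrd H₂ χ 1)
    (hlt : ∀ m < n, ∃ χ : Fin m → Fin m → Fin 2, (∀ u v, χ u v = χ v u) ∧
      ¬ ContainsOrd H₁ χ 0 ∧ ¬ ContainsOrd H₂ χ 1) :
    Rord2 H₁ H₂ = n := by
  refine le_antisymm (Nat.sInf_le hn) (le_csInf ⟨n, hn⟩ fun m hm => not_lt.1 fun hmn => ?_)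
  obtain ⟨χ, hχ, h₁, h₂⟩ := hlt m hmn
  exact (hm χ hχ).elim h₁ h₂

theorem stmt10 (a b : ℕ) (ha : 1 ≤ a) (hb : 2 ≤ b) :
    Rord2 (starSC a) (monCycle b) = 1 + (a - 1) * (b - 1) := by
  obtain ⟨a, rfl⟩ : ∃ a', a = a' + 1 := ⟨a - 1, by omega⟩
  obtain ⟨k, rfl⟩ : ∃ k, b = k + 2 := ⟨b - 2, by omega⟩
  rw [Nat.add_sub_cancel, show k + 2 - 1 = k + 1 by omega]
  exact rord2_eq (fun χ hχ => containsOrd_starSC_or_monCycle hχ (by omega))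
    fun m hm => exists_coloring_not_starSC_not_monCycle (by omega)
end

section
/- Let a, b ≥ 2 be even with at least one of a, b not divisible by 4. Then the cyclic Ramsey number of nested matchings satisfies R_cyc(M_a^nest, M_b^nest) = a + b − 2. -/
/-!
Upper bound: in a colouring of `Fin (a + b - 2)` the `a/2 + b/2 - 1` nested pairs `{i, rev i}`
with `2 i + 1 < a + b - 2` contain `a/2` pairs of colour `0` or `b/2` pairs of colour `1`, and any
`k` nested pairs span an increasing copy of the nested matching of order `2k`.

Lower bound: a cyclic copy of the nested matching of order `m` is a strictly increasing
`ψ : Fin m → Fin n` carrying the matching `p + q = c` (`c` odd) of `Fin m`, and strictly increasing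
maps do not decrease circular distance. If `m / 2` is odd this matching has a chord of circular
length `m / 2`, so it avoids a colour used only on chords shorter than `m / 2`. On the other hand
its two innermost chords join cyclically consecutive vertices, so if all its chords have length at
least `d` then `n ≥ 2 d + m - 2`. Hence colouring by circular distance `< a / 2` (with `a / 2` odd)
shows that `a + b - 3` vertices do not suffice.
-/

open SimpleGraph Finset

lemma nestedMatching_adj {m : ℕ} {u v : Fin m} :
    (nestedMatching m).Adj u v ↔ u ≠ v ∧ (u : ℕ) + v + 1 = m := by
  have := u.isLt
  rw [nestedMatching, fromRel_adj]
  omega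

lemma Finset.exists_strictMono_forall_mem {α : Type*} [LinearOrder α] {S : Finset α} {k : ℕ}
    (hS : k ≤ #S) : ∃ g : Fin k → α, StrictMono g ∧ ∀ i, g i ∈ S :=
  ⟨fun i => S.orderEmbOfFin rfl (Fin.castLE hS i),
    (S.orderEmbOfFin rfl).strictMono.comp (Fin.strictMono_castLE hS),
    fun _ => S.orderEmbOfFin_mem rfl _⟩

lemma strictMono_append_rev {n k : ℕ} {f : Fin k → Fin n} (hf : StrictMono f)
    (hhalf : ∀ i, 2 * (f i : ℕ) + 1 < n) :
    StrictMono (Fin.append f fun i => (f i.rev).rev) := by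
  intro u v huv
  induction u using Fin.addCases with
  | left i => induction v using Fin.addCases with
    | left i' =>
      rw [Fin.append_left, Fin.append_left]
      exact hf huv
    | right i' =>
      have := hhalf i
      have := hhalf i'.rev
      rw [Fin.append_left, Fin.append_right, Fin.lt_def, Fin.val_rev]
      omega
  | right i => induction v using Fin.addCases with
    | left i' =>
      rw [Fin.lt_def, Fin.val_natAdd, Fin.val_castAdd] at huv
      omega
    | right i' =>
      rw [Fin.append_right, Fin.append_right, Fin.rev_lt_rev]
      exact hf (Fin.rev_lt_rev.mpr (by simpa using huv))

lemma containsOrd_nestedMatching_of_nestedPairs {n k c : ℕ} {χ : Fin n → Fin n → Fin c}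
    (hχ : ∀ u v, χ u v = χ v u) {j : Fin c} {f : Fin k → Fin n} (hf : StrictMono f)
    (hhalf : ∀ i, 2 * (f i : ℕ) + 1 < n) (hcol : ∀ i, χ (f i) (f i).rev = j) :
    ContainsOrd (nestedMatching (k + k)) χ j := by
  have hrev (i i' : Fin k) (h : (i : ℕ) + i' + 1 = k) : χ (f i) (f i'.rev).rev = j := by
    rw [show i'.rev = i from Fin.ext (by rw [Fin.val_rev]; omega)]
    exact hcol i
  refine ⟨_, strictMono_append_rev hf hhalf, fun u v huv => ?_⟩
  obtain ⟨-, huv⟩ := nestedMatching_adj.mp huv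
  induction u using Fin.addCases with
  | left i => induction v using Fin.addCases with
    | left i' =>
      rw [Fin.val_castAdd, Fin.val_castAdd] at huv
      omega
    | right i' =>
      rw [Fin.val_castAdd, Fin.val_natAdd] at huv
      rw [Fin.append_left, Fin.append_right]
      exact hrev i i' (by omega)
  | right i => induction v using Fin.addCases with
    | left i' =>
      rw [Fin.val_natAdd, Fin.val_castAdd] at huv
      rw [Fin.append_left, Fin.append_right, hχ]
      exact hrev i' i (by omega)
    | right i' =>
      rw [Fin.val_natAdd, Fin.val_natAdd] at huv
      omega

lemma containsOrd_nestedMatching_or {k l : ℕ}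
    {χ : Fin (k + k + (l + l) - 2) → Fin (k + k + (l + l) - 2) → Fin 2}
    (hχ : ∀ u v, χ u v = χ v u) :
    ContainsOrd (nestedMatching (k + k)) χ 0 ∨ ContainsOrd (nestedMatching (l + l)) χ 1 := by
  let e : Fin (k + l - 1) → Fin (k + k + (l + l) - 2) := Fin.castLE (by omega)
  have of_pairs {m : ℕ} {j : Fin 2} {S : Finset (Fin (k + l - 1))} (hS : m ≤ #S)
      (hcol : ∀ i ∈ S, χ (e i) (e i).rev = j) : ContainsOrd (nestedMatching (m + m)) χ j := by
    obtain ⟨g, hg, hgS⟩ := S.exists_strictMono_forall_mem hS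
    refine containsOrd_nestedMatching_of_nestedPairs hχ ((Fin.strictMono_castLE _).comp hg)
      (fun i => ?_) (fun i => hcol _ (hgS i))
    have := (g i).isLt
    simp only [Function.comp_apply, Fin.val_castLE]
    omega
  have hcard := card_filter_add_card_filter_not (s := univ) fun i => χ (e i) (e i).rev = 0
  rw [card_univ, Fintype.card_fin] at hcard
  rcases le_or_gt k #{i | χ (e i) (e i).rev = 0} with hS | hS
  · exact .inl (of_pairs hS fun i hi => (mem_filter.mp hi).2)
  · refine .inr (of_pairs (S := {i | ¬χ (e i) (e i).rev = 0}) (by omega) fun i hi => ?_)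
    exact Fin.eq_one_of_ne_zero _ (mem_filter.mp hi).2

lemma ContainsOrd.containsCyc {m n k : ℕ} [NeZero m] {H : SimpleGraph (Fin m)}
    {χ : Fin n → Fin n → Fin k} {j : Fin k} (h : ContainsOrd H χ j) : ContainsCyc H χ j :=
  let ⟨φ, hφ, hcol⟩ := h
  ⟨φ, ⟨0, by simpa using hφ⟩, hcol⟩

def cdist {n : ℕ} (x y : Fin n) : ℕ := min (y - x : Fin n) (x - y : Fin n)

lemma cdist_comm {n : ℕ} (x y : Fin n) : cdist x y = cdist y x := min_comm _ _

lemma le_of_le_cdist {n d : ℕ} {x y : Fin n} (hxy : x < y) (h : d ≤ cdist x y) :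
    d + x ≤ y ∧ d + y ≤ n + x := by
  rw [cdist, Fin.sub_val_of_le hxy.le, Fin.coe_sub_iff_lt.mpr hxy, le_min_iff] at h
  omega

section StrictMono

variable {m n : ℕ} {ψ : Fin m → Fin n}

lemma StrictMono.val_apply_add_val_le (hψ : StrictMono ψ) {i j : Fin m} (hij : i ≤ j) :
    (ψ i : ℕ) + j ≤ ψ j + i := by
  obtain ⟨d, hd⟩ := Nat.exists_eq_add_of_le (Fin.le_def.mp hij)
  induction d generalizing j with
  | zero => rw [Fin.ext (by omega : (j : ℕ) = i)]
  | succ d ih =>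
    have hlt : (⟨i + d, by omega⟩ : Fin m) < j := Fin.mk_lt_of_lt_val (by omega)
    have := ih (j := ⟨i + d, by omega⟩) (Fin.le_def.mpr (by simp)) rfl
    have := Fin.lt_def.mp (hψ hlt)
    simp only at *
    omega

lemma StrictMono.val_le_val_apply (hψ : StrictMono ψ) (i : Fin m) : (i : ℕ) ≤ ψ i := by
  have := hψ.val_apply_add_val_le (i := ⟨0, i.pos⟩) (j := i) (Fin.le_def.mpr (Nat.zero_le _))
  simp only at this
  omega

lemma StrictMono.val_apply_add_le_add_val (hψ : StrictMono ψ) (i : Fin m) :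
    (ψ i : ℕ) + m ≤ n + i := by
  have hi := i.isLt
  have := hψ.val_apply_add_val_le (i := i) (j := ⟨m - 1, by omega⟩)
    (Fin.le_def.mpr (by simp only; omega))
  have := (ψ ⟨m - 1, by omega⟩).isLt
  simp only at *
  omega

lemma StrictMono.val_sub_le_val_sub (hψ : StrictMono ψ) (x y : Fin m) :
    ((y - x : Fin m) : ℕ) ≤ (ψ y - ψ x : Fin n) := by
  rcases le_or_gt x y with hxy | hxy
  · rw [Fin.sub_val_of_le hxy, Fin.sub_val_of_le (hψ.monotone hxy)]
    have := hψ.val_apply_add_val_le hxy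
    omega
  · rw [Fin.coe_sub_iff_lt.mpr hxy, Fin.coe_sub_iff_lt.mpr (hψ hxy)]
    have := hψ.val_le_val_apply y
    have := hψ.val_apply_add_le_add_val x
    omega

lemma cdist_le_cdist_of_strictMono (hψ : StrictMono ψ) (x y : Fin m) :
    cdist x y ≤ cdist (ψ x) (ψ y) :=
  min_le_min (hψ.val_sub_le_val_sub x y) (hψ.val_sub_le_val_sub y x)

end StrictMono

/-- Rotating the nested matching by `t` turns it into the matching `p + q = c` of `Fin m`
with `c = rev (t + t)`, which has odd value since `m` is even. -/
lemma ContainsCyc.exists_strictMono_of_nestedMatching {m n k : ℕ} (hm : Even m)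
    {χ : Fin n → Fin n → Fin k} {j : Fin k} (h : ContainsCyc (nestedMatching m) χ j) :
    ∃ ψ : Fin m → Fin n, StrictMono ψ ∧
      ∃ c : Fin m, Odd (c : ℕ) ∧ ∀ p q, p + q = c → χ (ψ p) (ψ q) = j := by
  obtain ⟨φ, ⟨t, hφ⟩, hcol⟩ := h
  obtain ⟨r, rfl⟩ := hm
  have ht := t.isLt
  have htt := Fin.val_add_eq_ite t t
  refine ⟨_, hφ, (t + t).rev, ?_, fun p q hpq => hcol _ _ (nestedMatching_adj.mpr ?_)⟩
  · rw [Fin.val_rev, Nat.odd_iff]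
    split_ifs at htt <;> omega
  · have := congrArg Fin.val hpq
    rw [Fin.val_rev, Fin.val_add_eq_ite] at this
    have hp := Fin.val_add_eq_ite p t
    have hq := Fin.val_add_eq_ite q t
    rw [Ne, Fin.ext_iff, hp, hq]
    split_ifs at * <;> omega

lemma cdist_eq_of_val_add {k : ℕ} {p q : Fin (k + k)} (h : (q : ℕ) = p + k) :
    cdist p q = k := by
  have hpq : p < q := Fin.lt_def.mpr (by omega)
  rw [cdist, Fin.sub_val_of_le hpq.le, Fin.coe_sub_iff_lt.mpr hpq]
  omega

lemma exists_add_eq_cdist_eq {k : ℕ} (hk : Odd k) {c : Fin (k + k)} (hc : Odd (c : ℕ)) :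
    ∃ p q : Fin (k + k), p + q = c ∧ cdist p q = k := by
  obtain ⟨w, rfl⟩ := hk
  obtain ⟨s, hs⟩ := hc
  have := c.isLt
  rcases lt_or_ge s w with hsw | hsw
  · refine ⟨⟨s + w + 1, by omega⟩, ⟨s + 3 * w + 2, by omega⟩, ?_,
      cdist_eq_of_val_add (by simp only; omega)⟩
    rw [Fin.ext_iff, Fin.val_add_eq_ite]; simp only; split_ifs <;> omega
  · refine ⟨⟨s - w, by omega⟩, ⟨s + w + 1, by omega⟩, ?_,
      cdist_eq_of_val_add (by simp only; omega)⟩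
    rw [Fin.ext_iff, Fin.val_add_eq_ite]; simp only; split_ifs <;> omega

lemma not_containsCyc_of_cdist_lt {n k c : ℕ} (hk : Odd k) {χ : Fin n → Fin n → Fin c}
    {j : Fin c} (hχ : ∀ u v, χ u v = j → cdist u v < k) :
    ¬ ContainsCyc (nestedMatching (k + k)) χ j := by
  intro h
  obtain ⟨ψ, hψ, c, hc, hcol⟩ := h.exists_strictMono_of_nestedMatching ⟨k, rfl⟩
  obtain ⟨p, q, hpq, hdist⟩ := exists_add_eq_cdist_eq hk hc
  have := cdist_le_cdist_of_strictMono hψ p q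
  have := hχ _ _ (hcol p q hpq)
  omega

/-- The two innermost chords of the rotated matching `p + q = c` join cyclically consecutive
vertices, so their images cut off two arcs of length at least `d` besides the `m - 2` other
vertices. -/
lemma add_le_of_le_cdist {m n d : ℕ} (hm : Even m) {ψ : Fin m → Fin n} (hψ : StrictMono ψ)
    {c : Fin m} (hc : Odd (c : ℕ)) (h : ∀ p q, p + q = c → d ≤ cdist (ψ p) (ψ q)) :
    d + d + m ≤ n + 2 := by
  obtain ⟨r, rfl⟩ := hm
  obtain ⟨l, hl⟩ := hc
  have := c.isLt
  have chord : ∀ p q : Fin (r + r), (p : ℕ) < q →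
      (p : ℕ) + q = c ∨ (p : ℕ) + q = c + (r + r) → d + ψ p ≤ ψ q ∧ d + ψ q ≤ n + ψ p := by
    intro p q hpq hsum
    refine le_of_le_cdist (hψ hpq) (h p q ?_)
    rw [Fin.ext_iff, Fin.val_add_eq_ite]
    split_ifs <;> omega
  rcases lt_or_ge (l + 1) r with hlr | hlr
  · have h₁ := chord ⟨l, by omega⟩ ⟨l + 1, by omega⟩ (by simp) (by simp only; omega)
    have h₂ := chord ⟨l + r, by omega⟩ ⟨l + r + 1, by omega⟩ (by simp)
      (by simp only; omega)
    have := hψ.val_le_val_apply ⟨l, by omega⟩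
    have := hψ.val_apply_add_val_le (i := ⟨l + 1, by omega⟩) (j := ⟨l + r, by omega⟩)
      (Fin.le_def.mpr (by simp only; omega))
    have := hψ.val_apply_add_le_add_val ⟨l + r + 1, by omega⟩
    simp only at *
    omega
  · have h₁ := chord ⟨l, by omega⟩ ⟨l + 1, by omega⟩ (by simp) (by simp only; omega)
    have h₂ := chord ⟨0, by omega⟩ ⟨r + r - 1, by omega⟩ (by simp only; omega)
      (by simp only; omega)
    have := hψ.val_apply_add_val_le (i := ⟨0, by omega⟩) (j := ⟨l, by omega⟩)
      (Fin.le_def.mpr (by simp only; omega))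
    have := hψ.val_apply_add_val_le (i := ⟨l + 1, by omega⟩) (j := ⟨r + r - 1, by omega⟩)
      (Fin.le_def.mpr (by simp only; omega))
    simp only at *
    omega

lemma not_containsCyc_of_le_cdist {m n d c : ℕ} (hm : Even m) (hn : n + 2 < d + d + m)
    {χ : Fin n → Fin n → Fin c} {j : Fin c} (hχ : ∀ u v, χ u v = j → d ≤ cdist u v) :
    ¬ ContainsCyc (nestedMatching m) χ j := by
  intro h
  obtain ⟨ψ, hψ, c, hc, hcol⟩ := h.exists_strictMono_of_nestedMatching hm
  have := add_le_of_le_cdist hm hψ hc fun p q hpq => hχ _ _ (hcol p q hpq)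
  omega

lemma exists_coloring_not_containsCyc {n k m c : ℕ} (hk : Odd k) (hm : Even m)
    (hn : n + 3 ≤ k + k + m) {j j' : Fin c} (hj : j ≠ j') :
    ∃ χ : Fin n → Fin n → Fin c, (∀ u v, χ u v = χ v u) ∧
      ¬ ContainsCyc (nestedMatching (k + k)) χ j ∧ ¬ ContainsCyc (nestedMatching m) χ j' := by
  refine ⟨fun u v => if cdist u v < k then j else j', fun u v => by dsimp only; rw [cdist_comm],
    not_containsCyc_of_cdist_lt hk fun u v huv => ?_,
    not_containsCyc_of_le_cdist (d := k) hm (by omega) fun u v huv => ?_⟩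
  · by_contra hlt
    exact hj.symm (by simpa [hlt] using huv)
  · by_contra! hlt
    exact hj (by simpa [hlt] using huv)

theorem stmt15 (a b : ℕ) (ha : 2 ≤ a) (hb : 2 ≤ b) (hea : Even a) (heb : Even b)
    (h4 : ¬ (4 ∣ a) ∨ ¬ (4 ∣ b)) :
    Rcyc2 (nestedMatching a) (nestedMatching b) = a + b - 2 := by
  obtain ⟨k, rfl⟩ := hea
  obtain ⟨l, rfl⟩ := heb
  have : NeZero (k + k) := ⟨by omega⟩
  have : NeZero (l + l) := ⟨by omega⟩
  refine IsLeast.csInf_eq ⟨fun χ hχ => (containsOrd_nestedMatching_or hχ).imp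
    ContainsOrd.containsCyc ContainsOrd.containsCyc, fun n hn => ?_⟩
  by_contra! hlt
  rcases h4 with h4 | h4
  · obtain ⟨χ, hχ, h₀, h₁⟩ := exists_coloring_not_containsCyc (n := n) (k := k)
      (j := (0 : Fin 2)) (j' := 1) (Nat.odd_iff.mpr (by omega)) ⟨l, rfl⟩ (by omega) (by decide)
    exact (hn χ hχ).elim h₀ h₁
  · obtain ⟨χ, hχ, h₁, h₀⟩ := exists_coloring_not_containsCyc (n := n) (k := l)
      (j := (1 : Fin 2)) (j' := 0) (Nat.odd_iff.mpr (by omega)) ⟨k, rfl⟩ (by omega) (by decide)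
    exact (hn χ hχ).elim h₀ h₁
end
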